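/- arXiv:math/0411422 — 3 statements merged into one kernel-verified Lean document; each statement's English description precedes it below -/
import Mathlib

section
/- Let K be a field, let R = K[x_0, …, x_n] and S = K[x_0, …, x_m] with m ≤ n, and let I ⊂ S be a nonzero ideal. Then the extended ideal IR is Ratliff-Rush closed in R if and only if I is Ratliff-Rush closed in S. -/
/-!
Renaming the variables of `K[x_0, …, x_m]` into `K[x_0, …, x_n]` is, up to a ring isomorphism,
the constant embedding `C` of `K[x_0, …, x_m]` into a polynomial ring over it in the remaining
variables. Ratliff-Rush closedness is invariant under ring isomorphisms, and it is invariant under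
extension along `C` because colon ideals of extended ideals are computed coefficientwise:
`(A[Y] : B[Y]) = (A : B)[Y]`, while `A[Y] ≤ B[Y]` only if `A ≤ B`.
-/

/-- The Ratliff-Rush closure set `⋃_{k ≥ 1} (I^{k+1} : I^k)`. -/
def rrSet {R : Type*} [CommRing R] (I : Ideal R) : Set R :=
  ⋃ k ∈ Set.Ici (1 : ℕ), ((I ^ (k + 1)).colon ((I ^ k : Ideal R) : Set R) : Set R)

/-- An ideal is Ratliff-Rush closed if it equals its Ratliff-Rush closure. -/
def IsRatliffRushClosed {R : Type*} [CommRing R] (I : Ideal R) : Prop :=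
  rrSet I = (I : Set R)

open MvPolynomial

section RatliffRush

variable {R S σ τ : Type*} [CommRing R] [CommRing S]

theorem Ideal.le_colon_pow_succ (I : Ideal R) (k : ℕ) :
    I ≤ (I ^ (k + 1)).colon ((I ^ k : Ideal R) : Set R) := fun x hx =>
  Submodule.mem_colon.2 fun y hy => by
    rw [smul_eq_mul, pow_succ']
    exact Ideal.mul_mem_mul hx hy

theorem isRatliffRushClosed_iff_colon_le (I : Ideal R) :
    IsRatliffRushClosed I ↔ ∀ k, 1 ≤ k → (I ^ (k + 1)).colon ((I ^ k : Ideal R) : Set R) ≤ I := by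
  have hI : (I : Set R) ⊆ rrSet I := fun x hx =>
    Set.mem_biUnion (Set.mem_Ici.2 le_rfl) (I.le_colon_pow_succ 1 hx)
  rw [IsRatliffRushClosed, ← hI.ge_iff_eq', rrSet, Set.iUnion₂_subset_iff]
  rfl

theorem Ideal.colon_comap_of_surjective {F : Type*} [FunLike F R S] [RingHomClass F R S] {f : F}
    (hf : Function.Surjective f) (A B : Ideal S) :
    (A.comap f).colon (B.comap f : Set R) = (A.colon (B : Set S)).comap f := by
  ext x
  simp only [Ideal.mem_comap, Submodule.mem_colon, SetLike.mem_coe, smul_eq_mul, map_mul]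
  exact ⟨fun h b hb => by obtain ⟨a, rfl⟩ := hf b; exact h a hb, fun h a ha => h _ ha⟩

theorem isRatliffRushClosed_map_ringEquiv_iff (e : R ≃+* S) (I : Ideal R) :
    IsRatliffRushClosed (I.map (e : R →+* S)) ↔ IsRatliffRushClosed I := by
  simp only [isRatliffRushClosed_iff_colon_le]
  refine forall₂_congr fun k _ => ?_
  rw [← Ideal.map_pow, ← Ideal.map_pow, Ideal.map_comap_of_equiv, Ideal.map_comap_of_equiv,
    Ideal.map_comap_of_equiv, Ideal.colon_comap_of_surjective e.symm.surjective,
    Ideal.comap_le_comap_iff_of_surjective _ e.symm.surjective]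

theorem MvPolynomial.map_C_le_map_C_iff {A B : Ideal R} :
    A.map (C : R →+* MvPolynomial σ R) ≤ B.map C ↔ A ≤ B :=
  ⟨fun h a ha => by simpa using mem_map_C_iff.1 (h (Ideal.mem_map_of_mem C ha)) 0, Ideal.map_mono⟩

theorem MvPolynomial.colon_map_C (A B : Ideal R) :
    (A.map (C : R →+* MvPolynomial σ R)).colon (B.map (C : R →+* MvPolynomial σ R) : Set _) =
      (A.colon (B : Set R)).map C := by
  ext x
  simp only [mem_map_C_iff, Submodule.mem_colon, SetLike.mem_coe, smul_eq_mul]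
  constructor
  · intro h ν b hb
    simpa only [mul_comm x, coeff_C_mul, mul_comm b] using
      h (C b) (mem_map_C_iff.1 (Ideal.mem_map_of_mem C hb)) ν
  · intro h p hp ν
    classical
    rw [coeff_mul]
    exact Ideal.sum_mem _ fun uv _ => h uv.1 _ (hp uv.2)

theorem MvPolynomial.isRatliffRushClosed_map_C_iff (I : Ideal R) :
    IsRatliffRushClosed (I.map (C : R →+* MvPolynomial σ R)) ↔ IsRatliffRushClosed I := by
  simp only [isRatliffRushClosed_iff_colon_le, ← Ideal.map_pow, colon_map_C, map_C_le_map_C_iff]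

theorem MvPolynomial.exists_ringEquiv_comp_rename_eq_C {f : σ → τ} (hf : Function.Injective f) :
    ∃ e : MvPolynomial τ R ≃+* MvPolynomial ((Set.range f)ᶜ : Set τ) (MvPolynomial σ R),
      e.toRingHom.comp (rename f).toRingHom = C := by
  classical
  let g : τ ≃ ((Set.range f)ᶜ : Set τ) ⊕ σ := (Equiv.Set.sumCompl (Set.range f)).symm.trans <|
    (Equiv.sumComm _ _).trans <| Equiv.sumCongr (Equiv.refl _) (Equiv.ofInjective f hf).symm
  have hg (i : σ) : g (f i) = .inr i := by
    simp [g, Equiv.Set.sumCompl_symm_apply_of_mem (Set.mem_range_self i)]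
  let e := (renameEquiv R g).trans (sumAlgEquiv R _ σ)
  refine ⟨e.toRingEquiv, congrArg AlgHom.toRingHom (?_ : e.toAlgHom.comp (rename f) =
      IsScalarTower.toAlgHom R (MvPolynomial σ R) _)⟩
  exact algHom_ext fun i => by simp [e, hg, sumAlgEquiv_X_inr]

theorem MvPolynomial.isRatliffRushClosed_map_rename_iff {f : σ → τ} (hf : Function.Injective f)
    (I : Ideal (MvPolynomial σ R)) :
    IsRatliffRushClosed (I.map (rename f).toRingHom) ↔ IsRatliffRushClosed I := by
  obtain ⟨e, he⟩ := exists_ringEquiv_comp_rename_eq_C (R := R) hf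
  rw [← isRatliffRushClosed_map_ringEquiv_iff e, Ideal.map_map, ← RingEquiv.toRingHom_eq_coe, he,
    isRatliffRushClosed_map_C_iff]

end RatliffRush

theorem stmt3_general {K : Type*} [Field K] (n m : ℕ) (hmn : m ≤ n)
    (I : Ideal (MvPolynomial (Fin (m + 1)) K)) :
    IsRatliffRushClosed
      (I.map (MvPolynomial.rename (R := K) (Fin.castLE (Nat.succ_le_succ hmn))).toRingHom) ↔
    IsRatliffRushClosed I :=
  isRatliffRushClosed_map_rename_iff (Fin.castLE_injective _) I

/-- Let `R = K[x_0, …, x_n]` and `S = K[x_0, …, x_m]` with `m ≤ n`, and let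
`I ⊂ S` be a nonzero ideal. Then `IR` is Ratliff-Rush closed in `R` iff `I` is
Ratliff-Rush closed in `S`. -/
theorem stmt3 {K : Type*} [Field K] (n m : ℕ) (hmn : m ≤ n)
    (I : Ideal (MvPolynomial (Fin (m + 1)) K)) (hI : I ≠ ⊥) :
    IsRatliffRushClosed
      (I.map (MvPolynomial.rename (R := K) (Fin.castLE (Nat.succ_le_succ hmn))).toRingHom) ↔
    IsRatliffRushClosed I :=
  stmt3_general n m hmn I
end

section
/- With the notation of the context, assume ε > 0 or q_z > 0, and let χ be the set consisting of the monomials x_i x_p^q x_n^{υ−w−1} for 1 ≤ i ≤ r−1; x_i x_p^{q−1} x_n^{υ−w−1} for r ≤ i ≤ εp + r − r_z − 1, these included only when q_z = 0; x_i x_p^{q−1} x_n^{υ−w−1} for εp + r − ε r_z ≤ i ≤ p−1; and x_i x_p^{q−q_z−ε} x_n^{υ−1} for 1 ≤ i ≤ εp + r − r_z − 1 (monomials with a negative exponent being omitted). Then no monomial of χ belongs to the Ratliff-Rush closure of inP. -/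
/-- The variable `x_i` (for `1 ≤ i ≤ n`) of `K[x_1, …, x_n] = MvPolynomial (Fin n) K`. -/
noncomputable def xv (K : Type*) [Field K] (n : ℕ) [NeZero n] (i : ℕ) : MvPolynomial (Fin n) K :=
  MvPolynomial.X (Fin.ofNat n (i - 1 : ℕ))

/-- The monomial generators of the initial ideal `inP`: `x_i x_p^q` for `r ≤ i ≤ p`;
`x_j x_p^{q−qz−ε} x_n^{v−w}` for `εp + r − rz ≤ j ≤ p`; `x_n^v`; and `x_i x_j` for
`1 ≤ i ≤ j ≤ p−1`. A monomial with a negative exponent is omitted. -/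
noncomputable def inPgens (K : Type*) [Field K] (n : ℕ) [NeZero n] (p q r v w rz ε : ℕ) (qz : ℤ) :
    Set (MvPolynomial (Fin n) K) :=
  {f | ∃ i : ℕ, r ≤ i ∧ i ≤ p ∧ f = xv K n i * xv K n p ^ q} ∪
  {f | ∃ j : ℕ, ε * p + r ≤ j + rz ∧ j ≤ p ∧ qz + ε ≤ (q : ℤ) ∧
    f = xv K n j * xv K n p ^ ((q : ℤ) - qz - ε).toNat * xv K n n ^ (v - w)} ∪
  {xv K n n ^ v} ∪
  {f | ∃ i j : ℕ, 1 ≤ i ∧ i ≤ j ∧ j ≤ p - 1 ∧ f = xv K n i * xv K n j}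

open MvPolynomial

theorem Int.nonneg_or_eq_neg_one_of_natCast_eq_mul_add {t p r : ℕ} {a : ℤ} (hr : 1 ≤ r)
    (hrp : r ≤ p) (h : (t : ℤ) = a * p + r) : 0 ≤ a ∨ (a = -1 ∧ r = p) := by
  rcases le_or_gt 0 a with ha | ha
  · exact .inl ha
  · obtain rfl : a = -1 := by
      have : -1 ≤ a := by nlinarith
      omega
    omega

section WeightBound

theorem AddMonoidHom.monotone_of_canonicallyOrderedAdd {M N : Type*} [AddCommMonoid M]
    [PartialOrder M] [CanonicallyOrderedAdd M] [AddCommMonoid N] [PartialOrder N]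
    [CanonicallyOrderedAdd N] (φ : M →+ N) : Monotone φ := by
  intro a b hab
  obtain ⟨t, rfl⟩ := le_iff_exists_add.mp hab
  rw [map_add]
  exact le_self_add

variable {σ R : Type*}

theorem mul_le_weight_of_mem_span_monomial_pow [CommSemiring R] {D : Set (σ →₀ ℕ)}
    (φ : (σ →₀ ℕ) →+ ℕ) {E : σ →₀ ℕ} {c : ℕ} (hD : ∀ d ∈ D, d ≤ E → c ≤ φ d) (k : ℕ) {f : MvPolynomial σ R}
    (hf : f ∈ Ideal.span ((fun d => monomial d (1 : R)) '' D) ^ k) :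
    ∀ e ∈ f.support, e ≤ E → k * c ≤ φ e := by
  classical
  induction k generalizing f with
  | zero => simp
  | succ k ih =>
    rw [pow_succ] at hf
    refine Submodule.mul_induction_on hf (fun g hg h hh e he heE => ?_)
      (fun g h hg hh e he heE => ?_)
    · obtain ⟨e₁, he₁, e₂, he₂, rfl⟩ := Finset.mem_add.mp (support_mul g h he)
      obtain ⟨d, hd, hde₂⟩ := mem_ideal_span_monomial_image.mp hh e₂ he₂
      have h₁ := ih hg e₁ he₁ (le_trans le_self_add heE)
      have h₂ := hD d hd (le_trans hde₂ (le_trans le_add_self heE))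
      have h₃ := φ.monotone_of_canonicallyOrderedAdd hde₂
      rw [map_add]
      linarith
    · rcases Finset.mem_union.mp (support_add he) with he | he
      exacts [hg e he heE, hh e he heE]

theorem monomial_notMem_rrSet_of_weight [CommRing R] [Nontrivial R] {G : Set (MvPolynomial σ R)}
    {D : Set (σ →₀ ℕ)} (hGD : G ⊆ (fun d => monomial d (1 : R)) '' D) {F G₀ : σ →₀ ℕ}
    (hG₀ : monomial G₀ 1 ∈ G) (φ : (σ →₀ ℕ) →+ ℕ) (hF : φ F < φ G₀)
    (hD : ∀ d ∈ D, (∀ x, G₀ x = 0 → d x ≤ F x) → φ G₀ ≤ φ d) :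
    monomial F (1 : R) ∉ rrSet (Ideal.span G) := by
  intro hmem
  obtain ⟨k, -, hk⟩ := Set.mem_iUnion₂.mp hmem
  have hpow : monomial (F + k • G₀) (1 : R) ∈
      Ideal.span ((fun d => monomial d (1 : R)) '' D) ^ (k + 1) := by
    have := Submodule.mem_colon.mp hk _ (Ideal.pow_mem_pow (Ideal.subset_span hG₀) k)
    rw [smul_eq_mul, monomial_pow, monomial_mul, one_pow, one_mul] at this
    exact Ideal.pow_right_mono (Ideal.span_mono hGD) _ this
  have hbound := mul_le_weight_of_mem_span_monomial_pow φ (E := F + k • G₀)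
    (fun d hd hdE => hD d hd fun x hx => by simpa [hx] using hdE x) (k + 1) hpow
    (F + k • G₀) (by classical simp [support_monomial]) le_rfl
  rw [map_add, map_nsmul, smul_eq_mul] at hbound
  linarith

end WeightBound

section InP

variable {K : Type*} [Field K] {n : ℕ} [NeZero n]

open Finsupp (single)

def varIdx (n : ℕ) [NeZero n] (i : ℕ) : Fin n := Fin.ofNat n (i - 1)

theorem varIdx_eq_iff {a b : ℕ} (ha : a ≤ n) (hb : b ≤ n) :
    varIdx n a = varIdx n b ↔ a - 1 = b - 1 := by
  have := NeZero.pos n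
  rw [varIdx, varIdx, Fin.ext_iff, Fin.val_ofNat, Fin.val_ofNat, Nat.mod_eq_of_lt (by omega),
    Nat.mod_eq_of_lt (by omega)]

theorem single_varIdx_apply {a b : ℕ} (ha : a ≤ n) (hb : b ≤ n) (s : ℕ) :
    single (varIdx n a) s (varIdx n b) = if a - 1 = b - 1 then s else 0 := by
  simp only [Finsupp.single_apply, varIdx_eq_iff ha hb]

theorem xv_eq_monomial (a : ℕ) : xv K n a = monomial (single (varIdx n a) 1) 1 := rfl

theorem xv_pow (a s : ℕ) : xv K n a ^ s = monomial (single (varIdx n a) s) 1 := by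
  rw [xv_eq_monomial, monomial_pow, one_pow, Finsupp.smul_single, smul_eq_mul, mul_one]

theorem xv_mul_pow (a b s : ℕ) :
    xv K n a * xv K n b ^ s = monomial (single (varIdx n a) 1 + single (varIdx n b) s) 1 := by
  rw [xv_pow, xv_eq_monomial, monomial_mul, one_mul]

theorem xv_mul_pow_mul_pow (a b c s t : ℕ) :
    xv K n a * xv K n b ^ s * xv K n c ^ t =
      monomial (single (varIdx n a) 1 + single (varIdx n b) s + single (varIdx n c) t) 1 := by
  rw [xv_mul_pow, xv_pow, monomial_mul, one_mul]

def inPexps (n : ℕ) [NeZero n] (p q r v w rz ε : ℕ) (qz : ℤ) : Set (Fin n →₀ ℕ) :=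
  {d | ∃ i : ℕ, r ≤ i ∧ i ≤ p ∧ d = single (varIdx n i) 1 + single (varIdx n p) q} ∪
  {d | ∃ j : ℕ, ε * p + r ≤ j + rz ∧ j ≤ p ∧ qz + ε ≤ (q : ℤ) ∧
    d = single (varIdx n j) 1 + single (varIdx n p) ((q : ℤ) - qz - ε).toNat +
      single (varIdx n n) (v - w)} ∪
  {single (varIdx n n) v} ∪
  {d | ∃ i j : ℕ, 1 ≤ i ∧ i ≤ j ∧ j ≤ p - 1 ∧ d = single (varIdx n i) 1 + single (varIdx n j) 1}

theorem inPgens_subset_image_inPexps (p q r v w rz ε : ℕ) (qz : ℤ) :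
    inPgens K n p q r v w rz ε qz ⊆ (fun d => monomial d 1) '' inPexps n p q r v w rz ε qz := by
  rintro f (((⟨i, h₁, h₂, rfl⟩ | ⟨j, h₁, h₂, h₃, rfl⟩) | rfl) | ⟨i, j, h₁, h₂, h₃, rfl⟩)
  · exact ⟨_, .inl (.inl (.inl ⟨i, h₁, h₂, rfl⟩)), (xv_mul_pow ..).symm⟩
  · exact ⟨_, .inl (.inl (.inr ⟨j, h₁, h₂, h₃, rfl⟩)), (xv_mul_pow_mul_pow ..).symm⟩
  · exact ⟨_, .inl (.inr rfl), (xv_pow ..).symm⟩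
  · exact ⟨_, .inr ⟨i, j, h₁, h₂, h₃, rfl⟩, by rw [← pow_one (xv K n j), xv_mul_pow]⟩

theorem xp_pow_succ_mem_inPgens {p q r v w rz ε : ℕ} {qz : ℤ} (hrp : r ≤ p) :
    monomial (single (varIdx n p) (q + 1)) 1 ∈ inPgens K n p q r v w rz ε qz := by
  refine .inl (.inl (.inl ⟨p, hrp, le_rfl, ?_⟩))
  rw [xv_mul_pow, ← Finsupp.single_add, add_comm]

theorem xi_xp_pow_q_notMem_rrSet {p q r v w rz ε i : ℕ} {qz : ℤ} (hn : 2 ≤ n) (hp : p = n - 1)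
    (hw : w < v) (hi : 1 ≤ i) (hir : i < r) (hrp : r ≤ p) :
    xv K n i * xv K n p ^ q * xv K n n ^ (v - w - 1) ∉
      rrSet (Ideal.span (inPgens K n p q r v w rz ε qz)) := by
  rw [xv_mul_pow_mul_pow]
  refine monomial_notMem_rrSet_of_weight (inPgens_subset_image_inPexps ..)
    (xp_pow_succ_mem_inPgens hrp) (Finsupp.applyAddHom (varIdx n p)) ?_ ?_
  · simp (disch := omega) only [Finsupp.coe_add, Pi.add_apply, single_varIdx_apply, if_neg,
      ite_true, Finsupp.applyAddHom_apply]
    omega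
  · rintro d (((⟨j, hrj, hjp, rfl⟩ | ⟨j, hj, hjp, -, rfl⟩) | rfl) | ⟨j, l, hj, hjl, hlp, rfl⟩) hdF
    on_goal 1 => have := hdF (varIdx n j)
    on_goal 2 => have := hdF (varIdx n n)
    on_goal 3 => have := hdF (varIdx n n)
    on_goal 4 => have := hdF (varIdx n j); have := hdF (varIdx n l)
    all_goals
      clear hdF
      simp (disch := omega) only [Finsupp.coe_add, Pi.add_apply, single_varIdx_apply, if_neg,
        ite_true, true_implies, zero_add, add_zero, Finsupp.applyAddHom_apply] at *
      try split_ifs at *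
      all_goals omega

theorem xi_xp_pow_q_sub_one_notMem_rrSet {p q r v w rz ε i : ℕ} {qz : ℤ} (hn : 2 ≤ n)
    (hp : p = n - 1) (hw : w < v) (hq : 1 ≤ q) (hi : 1 ≤ i) (hip : i < p) (hrp : r ≤ p) :
    xv K n i * xv K n p ^ (q - 1) * xv K n n ^ (v - w - 1) ∉
      rrSet (Ideal.span (inPgens K n p q r v w rz ε qz)) := by
  rw [xv_mul_pow_mul_pow]
  refine monomial_notMem_rrSet_of_weight (inPgens_subset_image_inPexps ..)
    (xp_pow_succ_mem_inPgens hrp)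
    (Finsupp.applyAddHom (varIdx n i) + Finsupp.applyAddHom (varIdx n p)) ?_ ?_
  · simp (disch := omega) only [Finsupp.coe_add, Pi.add_apply, single_varIdx_apply, if_neg,
      ite_true, zero_add, add_zero, Finsupp.applyAddHom_apply, AddMonoidHom.add_apply]
    omega
  · rintro d (((⟨j, hrj, hjp, rfl⟩ | ⟨j, hj, hjp, -, rfl⟩) | rfl) | ⟨j, l, hj, hjl, hlp, rfl⟩) hdF
    on_goal 1 => have := hdF (varIdx n j)
    on_goal 2 => have := hdF (varIdx n n)
    on_goal 3 => have := hdF (varIdx n n)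
    on_goal 4 => have := hdF (varIdx n j); have := hdF (varIdx n l)
    all_goals
      clear hdF
      simp (disch := omega) only [Finsupp.coe_add, Pi.add_apply, single_varIdx_apply, if_neg,
        ite_true, true_implies, zero_add, add_zero, Finsupp.applyAddHom_apply,
        AddMonoidHom.add_apply] at *
      try split_ifs at *
      all_goals omega

theorem xi_xn_pow_v_sub_one_notMem_rrSet {p q r v w rz ε i : ℕ} {qz : ℤ} (hn : 2 ≤ n)
    (hp : p = n - 1) (hv : 1 ≤ v) (hi : 1 ≤ i) (hip : i < p) (hirz : i + rz < ε * p + r)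
    (hQ : ((q : ℤ) - qz - ε).toNat ≤ q) (hQr : ((q : ℤ) - qz - ε).toNat < q ∨ i < r) :
    xv K n i * xv K n p ^ ((q : ℤ) - qz - ε).toNat * xv K n n ^ (v - 1) ∉
      rrSet (Ideal.span (inPgens K n p q r v w rz ε qz)) := by
  rw [xv_mul_pow_mul_pow]
  refine monomial_notMem_rrSet_of_weight (inPgens_subset_image_inPexps ..)
    (G₀ := single (varIdx n n) v) (.inl (.inr (xv_pow ..).symm))
    (Finsupp.applyAddHom (varIdx n n)) ?_ ?_
  · simp (disch := omega) only [Finsupp.coe_add, Pi.add_apply, single_varIdx_apply, if_neg,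
      ite_true, zero_add, Finsupp.applyAddHom_apply]
    omega
  · rintro d (((⟨j, hrj, hjp, rfl⟩ | ⟨j, hj, hjp, -, rfl⟩) | rfl) | ⟨j, l, hj, hjl, hlp, rfl⟩) hdF
    on_goal 1 => have := hdF (varIdx n j); have := hdF (varIdx n p)
    on_goal 2 => have := hdF (varIdx n j); have := hdF (varIdx n p)
    on_goal 4 => have := hdF (varIdx n j); have := hdF (varIdx n l)
    all_goals
      clear hdF
      simp (disch := omega) only [Finsupp.coe_add, Pi.add_apply, single_varIdx_apply, if_neg,
        ite_true, true_implies, zero_add, add_zero, Finsupp.applyAddHom_apply] at *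
      try split_ifs at *
      all_goals omega

end InP

theorem stmt13_general {K : Type*} [Field K]
    (n p : ℕ) [NeZero n] (hn : 2 ≤ n) (hp : p = n - 1)
    (qf : ℕ → ℤ) (rf : ℕ → ℕ)
    (hqr : ∀ t : ℕ, 1 ≤ rf t ∧ rf t ≤ p ∧ (t : ℤ) = qf t * p + rf t)
    (u : ℕ)
    (v : ℕ) (hv1 : 1 ≤ v)
    (w z : ℕ) (hw : w ≤ v - 1)
    (q r : ℕ) (hr : r = rf u)
    (ε : ℕ) (hε : ε = if rf z < r then 0 else 1)
    (inP : Ideal (MvPolynomial (Fin n) K))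
    (hinP : inP = Ideal.span (inPgens K n p q r v w (rf z) ε (qf z))) :
    ∀ f ∈ ({f | ∃ i : ℕ, 1 ≤ i ∧ i + 1 ≤ r ∧ f = xv K n i * xv K n p ^ q * xv K n n ^ (v - w - 1)} ∪
        {f | ∃ i : ℕ, r ≤ i ∧ i + rf z + 1 ≤ ε * p + r ∧ qf z = 0 ∧ 1 ≤ q ∧
          f = xv K n i * xv K n p ^ (q - 1) * xv K n n ^ (v - w - 1)} ∪
        {f | ∃ i : ℕ, ε * p + r ≤ i + ε * rf z ∧ i ≤ p - 1 ∧ 1 ≤ q ∧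
          f = xv K n i * xv K n p ^ (q - 1) * xv K n n ^ (v - w - 1)} ∪
        {f | ∃ i : ℕ, 1 ≤ i ∧ i + rf z + 1 ≤ ε * p + r ∧ qf z + ε ≤ (q : ℤ) ∧
          f = xv K n i * xv K n p ^ ((q : ℤ) - qf z - ε).toNat * xv K n n ^ (v - 1)} :
            Set (MvPolynomial (Fin n) K)), f ∉ rrSet inP := by
  obtain ⟨hr1, hrp, -⟩ : 1 ≤ r ∧ r ≤ p ∧ _ := hr ▸ hqr u
  obtain ⟨hrz1, hrzp, hz⟩ := hqr z
  have hqz := Int.nonneg_or_eq_neg_one_of_natCast_eq_mul_add hrz1 hrzp hz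
  -- `omega` treats `ε * p` and `ε * rf z` as atoms, so their values are recorded here.
  have hεr : (ε = 0 ∧ ε * p = 0 ∧ ε * rf z = 0 ∧ rf z < r) ∨
      (ε = 1 ∧ ε * p = p ∧ ε * rf z = rf z ∧ r ≤ rf z) := by
    split_ifs at hε <;> subst hε <;> omega
  subst hinP
  rintro f (((⟨i, hi, hir, rfl⟩ | ⟨i, hri, hir, -, hq, rfl⟩) | ⟨i, hri, hip, hq, rfl⟩) |
    ⟨i, hi, hir, hqε, rfl⟩)
  · exact xi_xp_pow_q_notMem_rrSet hn hp (by omega) hi (by omega) hrp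
  · exact xi_xp_pow_q_sub_one_notMem_rrSet hn hp (by omega) hq (by omega) (by omega) hrp
  · exact xi_xp_pow_q_sub_one_notMem_rrSet hn hp (by omega) hq (by omega) (by omega) hrp
  · exact xi_xn_pow_v_sub_one_notMem_rrSet hn hp hv1 hi (by omega) (by omega) (by omega)
      (by omega)

/-- assume `ε > 0` or `qz > 0`, and let `χ` be the indicated set of monomials
(monomials with a negative exponent being omitted). Then no monomial of `χ` belongs to the
Ratliff-Rush closure of `inP`. -/
theorem stmt13 {K : Type*} [Field K]
    (n p : ℕ) [NeZero n] (hn : 2 ≤ n) (hp : p = n - 1)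
    (m : ℕ → ℕ) (hm0 : 0 < m 0) (hmn : 0 < m n)
    (harith : ∃ d : ℕ, 0 < d ∧ ∀ i < p, m (i + 1) = m i + d)
    (hgcd : ∀ c : ℕ, (∀ i ≤ p, c ∣ m i) → c ∣ m n → c = 1)
    (Γ Γ' : AddSubmonoid ℤ)
    (hΓ : Γ = AddSubmonoid.closure ((fun i => (m i : ℤ)) '' (Set.Iic p ∪ {n})))
    (hΓ' : Γ' = AddSubmonoid.closure ((fun i => (m i : ℤ)) '' Set.Iic p))
    (hmin : ∀ j ∈ (Set.Iic p ∪ {n} : Set ℕ),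
      (m j : ℤ) ∉ AddSubmonoid.closure ((fun i => (m i : ℤ)) '' ((Set.Iic p ∪ {n}) \ {j})))
    (qf : ℕ → ℤ) (rf : ℕ → ℕ)
    (hqr : ∀ t : ℕ, 1 ≤ rf t ∧ rf t ≤ p ∧ (t : ℤ) = qf t * p + rf t)
    (g : ℕ → ℤ) (hg : ∀ t, g t = qf t * m p + m (rf t))
    (S : Set ℤ) (hS : S = {γ : ℤ | γ ∈ Γ ∧ γ - m 0 ∉ Γ})
    (u : ℕ) (hu : g u ∉ S ∧ ∀ t < u, g t ∈ S)
    (v : ℕ) (hv1 : 1 ≤ v) (hv2 : (v : ℤ) * m n ∈ Γ')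
    (hv3 : ∀ b : ℕ, 1 ≤ b → b < v → (b : ℤ) * m n ∉ Γ')
    (w z L mu : ℕ) (hw : w ≤ v - 1) (hz : z ≤ u - 1) (hL : 1 ≤ L)
    (hgu : g u = (L : ℤ) * m 0 + (w : ℤ) * m n)
    (hvmn : (v : ℤ) * m n = (mu : ℤ) * m 0 + g z)
    (q r : ℕ) (hq : (q : ℤ) = qf u) (hr : r = rf u)
    (ε : ℕ) (hε : ε = if rf z < r then 0 else 1)
    (inP : Ideal (MvPolynomial (Fin n) K))
    (hinP : inP = Ideal.span (inPgens K n p q r v w (rf z) ε (qf z)))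
    (hcase : 0 < ε ∨ 0 < qf z) :
    ∀ f ∈ ({f | ∃ i : ℕ, 1 ≤ i ∧ i + 1 ≤ r ∧ f = xv K n i * xv K n p ^ q * xv K n n ^ (v - w - 1)} ∪
        {f | ∃ i : ℕ, r ≤ i ∧ i + rf z + 1 ≤ ε * p + r ∧ qf z = 0 ∧ 1 ≤ q ∧
          f = xv K n i * xv K n p ^ (q - 1) * xv K n n ^ (v - w - 1)} ∪
        {f | ∃ i : ℕ, ε * p + r ≤ i + ε * rf z ∧ i ≤ p - 1 ∧ 1 ≤ q ∧
          f = xv K n i * xv K n p ^ (q - 1) * xv K n n ^ (v - w - 1)} ∪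
        {f | ∃ i : ℕ, 1 ≤ i ∧ i + rf z + 1 ≤ ε * p + r ∧ qf z + ε ≤ (q : ℤ) ∧
          f = xv K n i * xv K n p ^ ((q : ℤ) - qf z - ε).toNat * xv K n n ^ (v - 1)} : Set (MvPolynomial (Fin n) K)), f ∉ rrSet inP :=
  stmt13_general n p hn hp qf rf hqr u v hv1 w z hw q r hr ε hε inP hinP
end

section
/- With the notation of the context, assume ε = 0 and q_z = 0, and let χ = {x_i x_p^q x_n^{υ−1} : 1 ≤ i ≤ r − r_z − 1} ∪ {x_i x_p^q x_n^{υ−w−1} : r − r_z ≤ i ≤ r−1}. Then no monomial of χ belongs to the Ratliff-Rush closure of inP. -/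
/-!
For `f = x_i x_p^q x_n^{v-w'-1}` (with `w' = 0` in the first family and `w' = w` in the second),
weigh an exponent vector `e` by `φ e = e_n + w' e_i`. Every generator of `inP` dividing
`f x_n^{vk}` has weight at least `v`: the only generators dividing it at all are `x_n^v` and, in
the second family, `x_i x_p^q x_n^{v-w}`. As `φ` is additive, every monomial of `inP^{k+1}`
dividing `f x_n^{vk}` then has weight at least `(k+1)v`, while `φ (f x_n^{vk}) = (k+1)v - 1`.
Since `x_n^{vk} ∈ inP^k`, this keeps `f` out of every `inP^{k+1} : inP^k`.
-/

namespace MvPolynomial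

section

variable {σ R : Type*} [CommSemiring R]

theorem span_monomial_mul_span_monomial_le {A B C : Set (σ →₀ ℕ)}
    (h : ∀ a ∈ A, ∀ b ∈ B, a + b ∈ C) :
    Ideal.span ((fun e => monomial e (1 : R)) '' A) * Ideal.span ((fun e => monomial e 1) '' B) ≤
      Ideal.span ((fun e => monomial e 1) '' C) := by
  rw [Ideal.span_mul_span']
  refine Ideal.span_mono ?_
  rintro _ ⟨_, ⟨a, ha, rfl⟩, _, ⟨b, hb, rfl⟩, rfl⟩
  exact ⟨a + b, h a ha b hb, by simp [monomial_mul]⟩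

/- Imposing the bound only on exponents dividing `M` makes these sets additive: a sum divides `M`
only if both summands do. -/
theorem span_monomial_pow_le (φ : (σ →₀ ℕ) →+ ℕ) {M : σ →₀ ℕ} {c : ℕ} {E : Set (σ →₀ ℕ)}
    (hE : ∀ e ∈ E, e ≤ M → c ≤ φ e) (k : ℕ) :
    Ideal.span ((fun e => monomial e (1 : R)) '' E) ^ k ≤
      Ideal.span ((fun e => monomial e 1) '' {e | e ≤ M → k * c ≤ φ e}) := by
  induction k with
  | zero =>
    rw [pow_zero, Ideal.one_eq_top, top_le_iff, Ideal.eq_top_iff_one, one_def]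
    exact Ideal.subset_span ⟨0, fun _ => by simp, rfl⟩
  | succ k ih =>
    rw [pow_succ]
    refine (Ideal.mul_mono_left ih).trans (span_monomial_mul_span_monomial_le ?_)
    intro a ha b hb hab
    have hM : a ≤ M ∧ b ≤ M := ⟨le_trans le_self_add hab, le_trans le_add_self hab⟩
    rw [map_add, add_mul, one_mul]
    exact add_le_add (ha hM.1) (hE b hb hM.2)

theorem le_weight_of_monomial_mem_span_pow (φ : (σ →₀ ℕ) →+ ℕ) {M : σ →₀ ℕ} {c : ℕ}
    {E : Set (σ →₀ ℕ)} (hE : ∀ e ∈ E, e ≤ M → c ≤ φ e) {k : ℕ} [Nontrivial R]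
    (hM : monomial M (1 : R) ∈ Ideal.span ((fun e => monomial e 1) '' E) ^ k) :
    k * c ≤ φ M := by
  classical
  obtain ⟨e, he, heM⟩ := mem_ideal_span_monomial_image.mp (span_monomial_pow_le φ hE k hM) M
    (by simp)
  calc k * c ≤ φ e := he heM
    _ ≤ φ e + φ (M - e) := le_self_add
    _ = φ M := by rw [← map_add, add_tsub_cancel_of_le heM]

end

theorem monomial_notMem_rrSet {σ R : Type*} [CommRing R] [Nontrivial R] {E : Set (σ →₀ ℕ)}
    {a d : σ →₀ ℕ} (hd : d ∈ E) (φ : (σ →₀ ℕ) →+ ℕ)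
    (hE : ∀ e ∈ E, ∀ k : ℕ, e ≤ a + k • d → φ d ≤ φ e) (ha : φ a < φ d) :
    monomial a (1 : R) ∉ rrSet (Ideal.span ((fun e => monomial e 1) '' E)) := by
  intro h
  obtain ⟨k, -, hk⟩ := Set.mem_iUnion₂.mp h
  have hdI : monomial d (1 : R) ∈ Ideal.span ((fun e => monomial e 1) '' E) :=
    Ideal.subset_span ⟨d, hd, rfl⟩
  have hmem := Submodule.mem_colon.mp hk _ (Ideal.pow_mem_pow hdI k)
  rw [smul_eq_mul, monomial_pow, monomial_mul, one_pow, mul_one] at hmem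
  have hle := le_weight_of_monomial_mem_span_pow φ (fun e he => hE e he k) hmem
  rw [map_add, map_nsmul, smul_eq_mul] at hle
  linarith

end MvPolynomial

open MvPolynomial

section InitialIdeal

variable {K : Type*} [Field K] {n : ℕ} [NeZero n]

-- Truncated subtraction makes `varIndex n 0 = varIndex n 1`, hence the bounds `1 ≤ j` below.
def varIndex (n : ℕ) [NeZero n] (j : ℕ) : Fin n := Fin.ofNat n (j - 1)

theorem varIndex_inj {i j : ℕ} (hi : 1 ≤ i) (hin : i ≤ n) (hj : 1 ≤ j) (hjn : j ≤ n) :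
    varIndex n i = varIndex n j ↔ i = j := by
  rw [varIndex, varIndex, Fin.ext_iff, Fin.val_ofNat, Fin.val_ofNat,
    Nat.mod_eq_of_lt (by omega), Nat.mod_eq_of_lt (by omega)]
  omega

theorem single_varIndex_apply {i j : ℕ} (hi : 1 ≤ i) (hin : i ≤ n) (hj : 1 ≤ j) (hjn : j ≤ n)
    (c : ℕ) : Finsupp.single (varIndex n i) c (varIndex n j) = if i = j then c else 0 := by
  simp only [Finsupp.single_apply, varIndex_inj hi hin hj hjn]

theorem xv_eq_monomial_s17 (j : ℕ) : xv K n j = monomial (Finsupp.single (varIndex n j) 1) 1 := rfl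

theorem le_weight_of_mem_inPgens {p q r v w rz i w' : ℕ} {e M : Fin n →₀ ℕ}
    (he : monomial e (1 : K) ∈ inPgens K n p q r v w rz 0 0) (hle : e ≤ M)
    (hp : p = n - 1) (hi : 1 ≤ i) (hir : i + 1 ≤ r) (hrp : r ≤ p) (hrz : rz < r)
    (hw'v : w' < v) (hw' : r ≤ i + rz → w' = w)
    (hM : ∀ j, 1 ≤ j → j < n →
      M (varIndex n j) ≤ (if j = i then 1 else 0) + (if j = p then q else 0)) :
    v ≤ e (varIndex n n) + w' * e (varIndex n i) := by
  have hc (j : ℕ) (hj : 1 ≤ j) (hjn : j < n) :=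
    (Finsupp.le_def.mp hle (varIndex n j)).trans (hM j hj hjn)
  rcases he with ((⟨a, hra, hap, heq⟩ | ⟨j, hrj, hjp, -, heq⟩) | heq) | ⟨a, b, ha, hab, hbp, heq⟩ <;>
    simp only [Set.mem_singleton_iff, xv_eq_monomial_s17, monomial_pow, monomial_mul, one_pow,
      mul_one, sub_zero, Nat.cast_zero, Int.toNat_natCast] at heq <;>
    obtain rfl := monomial_left_injective one_ne_zero heq
  · have := hc a (by omega) (by omega)
    simp (disch := omega) only [Finsupp.add_apply, Finsupp.smul_apply, single_varIndex_apply,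
      smul_eq_mul] at this
    split_ifs at this <;> omega
  · by_cases hji : j = i
    · subst hji
      obtain rfl := hw' (by omega)
      simp (disch := omega) only [Finsupp.add_apply, Finsupp.smul_apply, single_varIndex_apply,
        smul_eq_mul]
      split_ifs <;> omega
    · have := hc j (by omega) (by omega)
      simp (disch := omega) only [Finsupp.add_apply, Finsupp.smul_apply, single_varIndex_apply,
        smul_eq_mul] at this
      split_ifs at this <;> omega
  · simp (disch := omega) only [Finsupp.smul_apply, single_varIndex_apply, smul_eq_mul]
    split_ifs <;> omega
  · by_cases hai : a = i
    · have := hc b (by omega) (by omega)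
      simp (disch := omega) only [Finsupp.add_apply, single_varIndex_apply] at this
      split_ifs at this <;> omega
    · have := hc a (by omega) (by omega)
      simp (disch := omega) only [Finsupp.add_apply, single_varIndex_apply] at this
      split_ifs at this <;> omega

theorem inPgens_subset_range_monomial (p q r v w rz : ℕ) (ε : ℕ) (qz : ℤ) :
    inPgens K n p q r v w rz ε qz ⊆ Set.range (fun e => monomial e 1) := by
  rintro f (((⟨a, -, -, rfl⟩ | ⟨j, -, -, -, rfl⟩) | rfl) | ⟨a, b, -, -, -, rfl⟩) <;>
    simp only [xv_eq_monomial_s17, monomial_pow, monomial_mul, one_pow, mul_one] <;>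
    exact Set.mem_range_self _

theorem xv_mul_pow_mul_pow_notMem_rrSet {p q r v w rz i w' : ℕ} (hp : p = n - 1) (hi : 1 ≤ i)
    (hir : i + 1 ≤ r) (hrp : r ≤ p) (hrz : rz < r) (hw'v : w' < v)
    (hw' : r ≤ i + rz → w' = w) :
    xv K n i * xv K n p ^ q * xv K n n ^ (v - w' - 1) ∉
      rrSet (Ideal.span (inPgens K n p q r v w rz 0 0)) := by
  rw [← Set.image_preimage_eq_of_subset (inPgens_subset_range_monomial p q r v w rz 0 0)]
  simp only [xv_eq_monomial_s17, monomial_pow, monomial_mul, one_pow, mul_one]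
  refine monomial_notMem_rrSet (d := v • Finsupp.single (varIndex n n) 1) ?_
    (Finsupp.applyAddHom (varIndex n n) + w' • Finsupp.applyAddHom (varIndex n i)) ?_ ?_
  · refine Or.inl (Or.inr ?_)
    simp only [Set.mem_singleton_iff, xv_eq_monomial_s17, monomial_pow, one_pow]
  · intro e he k hle
    have := le_weight_of_mem_inPgens he hle hp hi hir hrp hrz hw'v hw' fun j hj hjn => by
      simp (disch := omega) only [Finsupp.add_apply, Finsupp.smul_apply, single_varIndex_apply,
        smul_eq_mul]
      split_ifs <;> omega
    simp (disch := omega) only [AddMonoidHom.add_apply, AddMonoidHom.smul_apply,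
      Finsupp.applyAddHom_apply, Finsupp.smul_apply, single_varIndex_apply, smul_eq_mul]
    split_ifs <;> omega
  · simp (disch := omega) only [AddMonoidHom.add_apply, AddMonoidHom.smul_apply,
      Finsupp.applyAddHom_apply, Finsupp.add_apply, Finsupp.smul_apply, single_varIndex_apply,
      smul_eq_mul]
    split_ifs <;> omega

end InitialIdeal

theorem stmt17_general {K : Type*} [Field K]
    (n p : ℕ) [NeZero n] (hp : p = n - 1)
    (qf : ℕ → ℤ) (rf : ℕ → ℕ)
    (hqr : ∀ t : ℕ, 1 ≤ rf t ∧ rf t ≤ p ∧ (t : ℤ) = qf t * p + rf t)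
    (u : ℕ)
    (v : ℕ) (hv1 : 1 ≤ v)
    (w z : ℕ) (hw : w ≤ v - 1)
    (q r : ℕ) (hr : r = rf u)
    (ε : ℕ) (hε : ε = if rf z < r then 0 else 1)
    (inP : Ideal (MvPolynomial (Fin n) K))
    (hinP : inP = Ideal.span (inPgens K n p q r v w (rf z) ε (qf z)))
    (hε0 : ε = 0) (hqz0 : qf z = 0) :
    ∀ f ∈ ({f | ∃ i : ℕ, 1 ≤ i ∧ i + rf z + 1 ≤ r ∧
          f = xv K n i * xv K n p ^ q * xv K n n ^ (v - 1)} ∪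
        {f | ∃ i : ℕ, r ≤ i + rf z ∧ i + 1 ≤ r ∧
          f = xv K n i * xv K n p ^ q * xv K n n ^ (v - w - 1)} : Set (MvPolynomial (Fin n) K)), f ∉ rrSet inP := by
  intro f hf
  obtain ⟨hr1, hrp, -⟩ := hqr u
  have hrz : rf z < r := by
    by_contra h
    rw [if_neg h] at hε
    omega
  rw [hinP, hε0, hqz0]
  rcases hf with ⟨i, hi, hir, rfl⟩ | ⟨i, hir, hi, rfl⟩
  · simpa using xv_mul_pow_mul_pow_notMem_rrSet (w' := 0) hp hi (by omega) (by omega) hrz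
      (by omega) (by omega)
  · exact xv_mul_pow_mul_pow_notMem_rrSet hp (by omega) hi (by omega) hrz (by omega) fun _ => rfl

/-- assume `ε = 0` and `qz = 0`, and let
`χ = {x_i x_p^q x_n^{v−1} : 1 ≤ i ≤ r − rz − 1} ∪ {x_i x_p^q x_n^{v−w−1} : r − rz ≤ i ≤ r−1}`.
Then no monomial of `χ` belongs to the Ratliff-Rush closure of `inP`. -/
theorem stmt17 {K : Type*} [Field K]
    (n p : ℕ) [NeZero n] (hn : 2 ≤ n) (hp : p = n - 1)
    (m : ℕ → ℕ) (hm0 : 0 < m 0) (hmn : 0 < m n)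
    (harith : ∃ d : ℕ, 0 < d ∧ ∀ i < p, m (i + 1) = m i + d)
    (hgcd : ∀ c : ℕ, (∀ i ≤ p, c ∣ m i) → c ∣ m n → c = 1)
    (Γ Γ' : AddSubmonoid ℤ)
    (hΓ : Γ = AddSubmonoid.closure ((fun i => (m i : ℤ)) '' (Set.Iic p ∪ {n})))
    (hΓ' : Γ' = AddSubmonoid.closure ((fun i => (m i : ℤ)) '' Set.Iic p))
    (hmin : ∀ j ∈ (Set.Iic p ∪ {n} : Set ℕ),
      (m j : ℤ) ∉ AddSubmonoid.closure ((fun i => (m i : ℤ)) '' ((Set.Iic p ∪ {n}) \ {j})))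
    (qf : ℕ → ℤ) (rf : ℕ → ℕ)
    (hqr : ∀ t : ℕ, 1 ≤ rf t ∧ rf t ≤ p ∧ (t : ℤ) = qf t * p + rf t)
    (g : ℕ → ℤ) (hg : ∀ t, g t = qf t * m p + m (rf t))
    (S : Set ℤ) (hS : S = {γ : ℤ | γ ∈ Γ ∧ γ - m 0 ∉ Γ})
    (u : ℕ) (hu : g u ∉ S ∧ ∀ t < u, g t ∈ S)
    (v : ℕ) (hv1 : 1 ≤ v) (hv2 : (v : ℤ) * m n ∈ Γ')
    (hv3 : ∀ b : ℕ, 1 ≤ b → b < v → (b : ℤ) * m n ∉ Γ')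
    (w z L mu : ℕ) (hw : w ≤ v - 1) (hz : z ≤ u - 1) (hL : 1 ≤ L)
    (hgu : g u = (L : ℤ) * m 0 + (w : ℤ) * m n)
    (hvmn : (v : ℤ) * m n = (mu : ℤ) * m 0 + g z)
    (q r : ℕ) (hq : (q : ℤ) = qf u) (hr : r = rf u)
    (ε : ℕ) (hε : ε = if rf z < r then 0 else 1)
    (inP : Ideal (MvPolynomial (Fin n) K))
    (hinP : inP = Ideal.span (inPgens K n p q r v w (rf z) ε (qf z)))
    (hε0 : ε = 0) (hqz0 : qf z = 0) :
    ∀ f ∈ ({f | ∃ i : ℕ, 1 ≤ i ∧ i + rf z + 1 ≤ r ∧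
          f = xv K n i * xv K n p ^ q * xv K n n ^ (v - 1)} ∪
        {f | ∃ i : ℕ, r ≤ i + rf z ∧ i + 1 ≤ r ∧
          f = xv K n i * xv K n p ^ q * xv K n n ^ (v - w - 1)} : Set (MvPolynomial (Fin n) K)), f ∉ rrSet inP :=
  stmt17_general n p hp qf rf hqr u v hv1 w z hw q r hr ε hε inP hinP hε0 hqz0
end
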